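/- arXiv:1007.2159 — 2 statements merged into one kernel-verified Lean document; each statement's English description precedes it below -/
import Mathlib

section
/- Let p be a prime and G a finite group which is minimal parabolic with respect to p, and suppose every normal p-subgroup of G is trivial. Then for every normal subgroup N of G, either the quotient G/N is a p-group, or N is contained in the Frattini subgroup Φ(G). -/
/-- A finite group `G` with Sylow `p`-subgroup `T` is *minimal parabolic* (with respect to `p`)
if `T` is not normal in `G` and there is a unique maximal subgroup of `G` containing `T`. -/
def IsMinimalParabolic (p : ℕ) (G : Type*) [Group G] (T : Sylow p G) : Prop :=
  ¬ (T : Subgroup G).Normal ∧ ∃! M : Subgroup G, IsCoatom M ∧ (T : Subgroup G) ≤ M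

/-! If `T N ≠ G`, then `T N` lies in the unique maximal subgroup `M` above `T`, so `N ≤ M`.
By the Frattini argument `G = N_G(T ∩ N) N`; since `T ≤ N_G(T ∩ N)`, this normalizer cannot
lie in `M`, so `T ∩ N` is a normal `p`-subgroup of `G`, hence trivial, and `p ∤ |N|`.
A maximal subgroup `C` with `N ≰ C` then has `G = C N`, so `|G : C|` divides `|N|` and `C`
contains a Sylow `p`-subgroup. Hence some conjugate of `C` is `M ⊇ N`, and as `N` is normal,
`N ≤ C`. -/

open Subgroup Pointwise

namespace Subgroup

variable {G : Type*} [Group G] [Finite G]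

theorem relIndex_sup_of_normal_right (H K : Subgroup G) [K.Normal] :
    H.relIndex (H ⊔ K) = H.relIndex K := by
  refine mul_left_cancel₀ (index_ne_zero_of_finite (H := K.subgroupOf H)) ?_
  calc K.relIndex H * H.relIndex (H ⊔ K)
      = (H ⊓ K).relIndex H * H.relIndex (H ⊔ K) := by rw [inf_relIndex_left]
    _ = (H ⊓ K).relIndex K * K.relIndex (H ⊔ K) := by
      rw [relIndex_mul_relIndex _ _ _ inf_le_left le_sup_left,
        relIndex_mul_relIndex _ _ _ inf_le_right le_sup_right]
    _ = K.relIndex H * H.relIndex K := by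
      rw [inf_relIndex_right, relIndex_sup_right, mul_comm]

theorem index_dvd_card_of_sup_eq_top {H N : Subgroup G} [N.Normal] (h : H ⊔ N = ⊤) :
    H.index ∣ Nat.card N := by
  rw [← relIndex_top_right, ← h, relIndex_sup_of_normal_right]
  exact relIndex_dvd_card H N

end Subgroup

namespace Sylow

variable {G : Type*} [Group G] [Finite G] {p : ℕ} [Fact p.Prime]

theorem not_dvd_relIndex (P : Sylow p G) (N : Subgroup G) [N.Normal] :
    ¬ p ∣ (P : Subgroup G).relIndex N := by
  rw [← relIndex_sup_of_normal_right]
  exact fun h ↦ P.not_dvd_index (h.trans (relIndex_dvd_index_of_le le_sup_left))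

noncomputable def subgroupOf (P : Sylow p G) (N : Subgroup G) [N.Normal] : Sylow p N :=
  P.isPGroup'.comap_subtype.toSylow (P.not_dvd_relIndex N)

theorem coe_subgroupOf (P : Sylow p G) (N : Subgroup G) [N.Normal] :
    (P.subgroupOf N : Subgroup N) = (P : Subgroup G).subgroupOf N :=
  rfl

theorem normalizer_inf_sup_eq_top (P : Sylow p G) (N : Subgroup G) [N.Normal] :
    normalizer (P ⊓ N : Subgroup G) ⊔ N = ⊤ := by
  have := normalizer_sup_eq_top (P.subgroupOf N)
  rwa [coe_subgroupOf, subgroupOf_map_subtype] at this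

theorem not_dvd_card_of_disjoint (P : Sylow p G) {N : Subgroup G} [N.Normal]
    (h : Disjoint (P : Subgroup G) N) : ¬ p ∣ Nat.card N := by
  have hcard : Nat.card ((P : Subgroup G).subgroupOf N) = 1 := by
    rw [subgroupOf_eq_bot.mpr h, card_bot]
  rw [← card_mul_index ((P : Subgroup G).subgroupOf N), hcard, one_mul]
  exact P.not_dvd_relIndex N

theorem exists_le_of_not_dvd_index {H : Subgroup G} (h : ¬ p ∣ H.index) :
    ∃ P : Sylow p G, (P : Subgroup G) ≤ H := by
  obtain ⟨Q⟩ := (nonempty : Nonempty (Sylow p H))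
  have hQ : ¬ p ∣ (Q.map H.subtype : Subgroup G).index := by
    rw [index_map_subtype, Nat.Prime.dvd_mul Fact.out]
    exact not_or_intro Q.not_dvd_index h
  exact ⟨(Q.2.map H.subtype).toSylow hQ, map_subtype_le _⟩

end Sylow

theorem IsPGroup.quotient_of_sup_eq_top {G : Type*} [Group G] {p : ℕ} {P N : Subgroup G}
    [N.Normal] (hP : IsPGroup p P) (h : P ⊔ N = ⊤) : IsPGroup p (G ⧸ N) := by
  refine hP.of_surjective ((QuotientGroup.mk' N).comp P.subtype) ?_
  rw [← MonoidHom.range_eq_top, MonoidHom.range_comp, range_subtype,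
    ← map_top_of_surjective _ (QuotientGroup.mk'_surjective N), ← h, Subgroup.map_sup,
    QuotientGroup.map_mk'_self, sup_bot_eq]

theorem le_of_le_of_ne_top_of_unique_coatom {α : Type*} [PartialOrder α] [OrderTop α]
    [IsCoatomic α] {a m b : α} (hm : ∀ c, IsCoatom c → a ≤ c → c = m) (hab : a ≤ b)
    (hb : b ≠ ⊤) : b ≤ m := by
  obtain ⟨c, hc, hbc⟩ := (eq_top_or_exists_le_coatom b).resolve_left hb
  exact hm c hc (hab.trans hbc) ▸ hbc

section UniqueMaximalAboveSylow

variable {G : Type*} [Group G] [Finite G] {p : ℕ} [Fact p.Prime] {T : Sylow p G}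
  {M : Subgroup G} (hM : ∀ C : Subgroup G, IsCoatom C → (T : Subgroup G) ≤ C → C = M)
  {N : Subgroup G} [N.Normal]
include hM

theorem normal_sylow_inf_of_le (hMtop : M ≠ ⊤) (hNM : N ≤ M) :
    ((T : Subgroup G) ⊓ N).Normal := by
  rw [← normalizer_eq_top_iff]
  by_contra hne
  have hT : (T : Subgroup G) ≤ normalizer ((T ⊓ N : Subgroup G) : Set G) :=
    (le_inf le_normalizer le_normalizer_of_normal).trans inf_normalizer_le_normalizer_inf
  refine hMtop (top_le_iff.mp ?_)
  rw [← T.normalizer_inf_sup_eq_top N]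
  exact sup_le (le_of_le_of_ne_top_of_unique_coatom hM hT hne) hNM

theorem le_of_sylow_le_coatom (hNM : N ≤ M) {C : Subgroup G} (hC : IsCoatom C)
    {Q : Sylow p G} (hQ : (Q : Subgroup G) ≤ C) : N ≤ C := by
  obtain ⟨g, rfl⟩ := MulAction.exists_smul_eq G T Q
  have hTC : (T : Subgroup G) ≤ C.comap (MulAut.conj g).toMonoidHom :=
    map_le_iff_le_comap.mp hQ
  have hCM := hM _ ((isCoatom_comap (MulAut.conj g)).mpr hC) hTC
  have hNC : MulAut.conj g • N ≤ C := map_le_iff_le_comap.mpr (hCM ▸ hNM)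
  rwa [Normal.conj_smul_eq_self g N] at hNC

theorem le_frattini_of_not_dvd_card (hNM : N ≤ M) (hN : ¬ p ∣ Nat.card N) :
    N ≤ frattini G := by
  refine le_iInf₂ fun C hC ↦ ?_
  by_contra hNC
  have hCN : C ⊔ N = ⊤ := hC.2 _ (left_lt_sup.mpr hNC)
  obtain ⟨Q, hQ⟩ := Sylow.exists_le_of_not_dvd_index (p := p)
    fun h ↦ hN (h.trans (index_dvd_card_of_sup_eq_top hCN))
  exact hNC (le_of_sylow_le_coatom hM hNM hC hQ)

end UniqueMaximalAboveSylow

/-- Let `G` be a finite group that is minimal parabolic with respect to the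
prime `p`, and suppose every normal `p`-subgroup of `G` is trivial.  Then for every normal
subgroup `N` of `G`, either `G/N` is a `p`-group, or `N` is contained in the Frattini subgroup
of `G`. -/
theorem pGroup_quotient_or_le_frattini_of_minimalParabolic
    {p : ℕ} (hp : p.Prime) {G : Type*} [Group G] [Finite G] (T : Sylow p G)
    (hmin : IsMinimalParabolic p G T)
    (hOp : ∀ P : Subgroup G, P.Normal → IsPGroup p P → P = ⊥)
    (N : Subgroup G) (hN : N.Normal) :
    IsPGroup p (G ⧸ N) ∨ N ≤ frattini G := by
  have := Fact.mk hp
  obtain ⟨M, ⟨hMmax, -⟩, hMuniq⟩ := hmin.2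
  have hM : ∀ C : Subgroup G, IsCoatom C → (T : Subgroup G) ≤ C → C = M :=
    fun C hC hTC ↦ hMuniq C ⟨hC, hTC⟩
  by_cases hTN : (T : Subgroup G) ⊔ N = ⊤
  · exact .inl (T.2.quotient_of_sup_eq_top hTN)
  · have hNM : N ≤ M :=
      le_sup_right.trans (le_of_le_of_ne_top_of_unique_coatom hM le_sup_left hTN)
    have hTN_bot : (T : Subgroup G) ⊓ N = ⊥ :=
      hOp _ (normal_sylow_inf_of_le hM hMmax.1 hNM) T.2.to_inf_left
    have hpN : ¬ p ∣ Nat.card N := T.not_dvd_card_of_disjoint (disjoint_iff.mpr hTN_bot)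
    exact .inr (le_frattini_of_not_dvd_card hM hNM hpN)
end

section
/- Let p be a prime, G a finite group, V an elementary abelian normal p-subgroup of G, and A ∈ 𝒜(G) a subgroup not centralizing V (i.e. [V,A] ≠ 1). Then A is a best offender on V with respect to the conjugation action. -/
/-- A subgroup is *elementary abelian* for the prime `p` if it is commutative and every
element `x` satisfies `x ^ p = 1`. -/
def IsElementaryAbelian (p : ℕ) {G : Type*} [Group G] (A : Subgroup G) : Prop :=
  (∀ a b : A, a * b = b * a) ∧ ∀ a : A, a ^ p = 1

/-- `𝒜(H)`: the set of elementary abelian `p`-subgroups of `H` of maximal order. -/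
def maxElemAbIn (p : ℕ) {G : Type*} [Group G] (H : Subgroup G) : Set (Subgroup G) :=
  {A | A ≤ H ∧ IsElementaryAbelian p A ∧
    ∀ B : Subgroup G, B ≤ H → IsElementaryAbelian p B → Nat.card B ≤ Nat.card A}

/-- The Thompson subgroup `J(H)` of `H`, generated by all members of `𝒜(H)`. -/
def thompsonJ (p : ℕ) {G : Type*} [Group G] (H : Subgroup G) : Subgroup G :=
  sSup (maxElemAbIn p H)

/-- `A` is a *best offender* on the normal subgroup `V` (with conjugation action):
`A/C_A(V)` is a nontrivial elementary abelian `p`-group and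
`|A : C_A(V)|·|C_V(A)| ≥ |B : C_B(V)|·|C_V(B)|` for every subgroup `B ≤ A`. -/
def IsBestOffenderOn (p : ℕ) {G : Type*} [Group G] (A V : Subgroup G) : Prop :=
  (¬ A ≤ Subgroup.centralizer (V : Set G)) ∧
  (∀ a ∈ A, a ^ p ∈ Subgroup.centralizer (V : Set G)) ∧
  (∀ a ∈ A, ∀ b ∈ A, a * b * a⁻¹ * b⁻¹ ∈ Subgroup.centralizer (V : Set G)) ∧
  ∀ B : Subgroup G, B ≤ A →
    (Subgroup.centralizer (V : Set G)).relIndex B *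
        Nat.card ↥(V ⊓ Subgroup.centralizer (B : Set G)) ≤
      (Subgroup.centralizer (V : Set G)).relIndex A *
        Nat.card ↥(V ⊓ Subgroup.centralizer (A : Set G))

/-!
Put `C = C_G(V)` and `X = C ∩ A`. For `B ≤ A`, the subgroup `D = C_V(B) · B · X` is elementary
abelian, since `X` centralizes `V` and `A` is abelian, so `|D| ≤ |A|` by maximality of `A`.
Counting `|D|` with the product formula, and using that `BX ∩ C_V(B) ≤ A ∩ V ≤ C_V(A)` and
`B ∩ X = B ∩ C`, this inequality becomes `|B : C_B(V)|·|C_V(B)| ≤ |A : C_A(V)|·|C_V(A)|`.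
-/

namespace Subgroup

variable {G : Type*} [Group G]

theorem relIndex_mul_card_inf (H K : Subgroup G) :
    H.relIndex K * Nat.card (H ⊓ K : Subgroup G) = Nat.card K := by
  rw [← inf_relIndex_right, mul_comm, ← relIndex_bot_left,
    relIndex_mul_relIndex ⊥ _ K bot_le inf_le_right, relIndex_bot_left]

theorem relIndex_sup_right_of_le_normalizer {H K : Subgroup G} (h : H ≤ normalizer (K : Set G)) :
    K.relIndex (H ⊔ K) = K.relIndex H :=
  haveI := normal_subgroupOf_of_le_normalizer h
  haveI := normal_subgroupOf_sup_of_le_normalizer h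
  Nat.card_congr (QuotientGroup.quotientInfEquivProdNormalizerQuotient H K h).toEquiv.symm

theorem card_sup_of_le_normalizer {H K : Subgroup G} (h : H ≤ normalizer (K : Set G)) :
    Nat.card (H ⊔ K : Subgroup G) = K.relIndex H * Nat.card K := by
  rw [← relIndex_mul_card_inf K (H ⊔ K), relIndex_sup_right_of_le_normalizer h,
    inf_eq_left.mpr le_sup_right]

end Subgroup

open Subgroup

section ElementaryAbelian

variable {p : ℕ} {G : Type*} [Group G]

theorem isElementaryAbelian_iff_forall_mem {A : Subgroup G} :
    IsElementaryAbelian p A ↔ (∀ a ∈ A, ∀ b ∈ A, Commute a b) ∧ ∀ a ∈ A, a ^ p = 1 := by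
  constructor
  · rintro ⟨hcomm, hpow⟩
    exact ⟨fun a ha b hb => congrArg Subtype.val (hcomm ⟨a, ha⟩ ⟨b, hb⟩),
      fun a ha => congrArg Subtype.val (hpow ⟨a, ha⟩)⟩
  · rintro ⟨hcomm, hpow⟩
    exact ⟨fun a b => Subtype.ext (hcomm a a.2 b b.2), fun a => Subtype.ext (hpow a a.2)⟩

namespace IsElementaryAbelian

theorem le_centralizer_self {A : Subgroup G} (hA : IsElementaryAbelian p A) :
    A ≤ centralizer (A : Set G) :=
  fun a ha b hb => ((isElementaryAbelian_iff_forall_mem.mp hA).1 a ha b hb).symm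

theorem mono {A B : Subgroup G} (hA : IsElementaryAbelian p A) (hBA : B ≤ A) :
    IsElementaryAbelian p B := by
  rw [isElementaryAbelian_iff_forall_mem] at hA ⊢
  exact ⟨fun a ha b hb => hA.1 a (hBA ha) b (hBA hb), fun a ha => hA.2 a (hBA ha)⟩

theorem sup_of_le_centralizer {S T : Subgroup G} (hS : IsElementaryAbelian p S)
    (hT : IsElementaryAbelian p T) (hST : S ≤ centralizer (T : Set G)) :
    IsElementaryAbelian p (S ⊔ T) := by
  rw [isElementaryAbelian_iff_forall_mem] at hS hT ⊢
  have hcomm : ∀ s ∈ S, ∀ t ∈ T, Commute s t := fun s hs t ht => (hST hs t ht).symm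
  have hprod : ∀ x ∈ S ⊔ T, ∃ s ∈ S, ∃ t ∈ T, s * t = x := fun x hx => by
    rwa [← SetLike.mem_coe, coe_mul_of_left_le_normalizer_right S T
      (hST.trans (centralizer_le_normalizer _))] at hx
  constructor
  · intro x hx y hy
    obtain ⟨s, hs, t, ht, rfl⟩ := hprod x hx
    obtain ⟨s', hs', t', ht', rfl⟩ := hprod y hy
    refine Commute.mul_left ?_ ?_ <;> refine Commute.mul_right ?_ ?_
    exacts [hS.1 s hs s' hs', hcomm s hs t' ht', (hcomm s' hs' t ht).symm, hT.1 t ht t' ht']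
  · intro x hx
    obtain ⟨s, hs, t, ht, rfl⟩ := hprod x hx
    rw [(hcomm s hs t ht).mul_pow, hS.2 s hs, hT.2 t ht, one_mul]

end IsElementaryAbelian

theorem relIndex_mul_card_centralizer_le_of_maximal [Finite G] {V A B : Subgroup G}
    (hV : IsElementaryAbelian p V) (hA : IsElementaryAbelian p A)
    (hAmax : ∀ D : Subgroup G, IsElementaryAbelian p D → Nat.card D ≤ Nat.card A)
    (hBA : B ≤ A) :
    (centralizer (V : Set G)).relIndex B * Nat.card ↥(V ⊓ centralizer (B : Set G)) ≤
      (centralizer (V : Set G)).relIndex A * Nat.card ↥(V ⊓ centralizer (A : Set G)) := by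
  set C := centralizer (V : Set G)
  set X := C ⊓ A
  set W := V ⊓ centralizer (B : Set G)
  set Z := V ⊓ centralizer (A : Set G)
  have hBX_le : B ⊔ X ≤ A := sup_le hBA inf_le_right
  have hB_norm : B ≤ normalizer (X : Set G) :=
    hBA.trans <| hA.le_centralizer_self.trans <|
      (centralizer_le (SetLike.coe_subset_coe.mpr inf_le_right)).trans
        (centralizer_le_normalizer _)
  have hW_cent : W ≤ centralizer ((B ⊔ X : Subgroup G) : Set G) := by
    rw [le_centralizer_iff]
    refine sup_le (le_centralizer_iff.mp inf_le_right) (inf_le_left.trans ?_)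
    exact centralizer_le (SetLike.coe_subset_coe.mpr inf_le_left)
  have hD : Nat.card (W ⊔ (B ⊔ X) : Subgroup G) ≤ Nat.card A :=
    hAmax _ ((hV.mono inf_le_left).sup_of_le_centralizer (hA.mono hBX_le) hW_cent)
  have hW_card : Nat.card W ≤ (B ⊔ X).relIndex W * Nat.card Z := by
    rw [← relIndex_mul_card_inf (B ⊔ X) W]
    refine Nat.mul_le_mul_left _ (card_le_of_le (le_inf (inf_le_right.trans inf_le_left) ?_))
    exact inf_le_left.trans (hBX_le.trans hA.le_centralizer_self)
  have hrelB : X.relIndex B = C.relIndex B := by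
    rw [← inf_relIndex_right X B, inf_assoc, inf_eq_right.mpr hBA, inf_relIndex_right]
  have hX_pos : 0 < Nat.card X := Nat.card_pos
  refine Nat.le_of_mul_le_mul_right ?_ hX_pos
  calc C.relIndex B * Nat.card W * Nat.card X
      ≤ C.relIndex B * ((B ⊔ X).relIndex W * Nat.card Z) * Nat.card X := by gcongr
    _ = Nat.card (W ⊔ (B ⊔ X) : Subgroup G) * Nat.card Z := by
        rw [card_sup_of_le_normalizer (hW_cent.trans (centralizer_le_normalizer _)),
          card_sup_of_le_normalizer hB_norm, hrelB]
        ring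
    _ ≤ Nat.card A * Nat.card Z := by gcongr
    _ = C.relIndex A * Nat.card Z * Nat.card X := by
        rw [← relIndex_mul_card_inf C A]
        ring

end ElementaryAbelian

theorem isBestOffender_of_mem_maxElemAb_general
    {p : ℕ} {G : Type*} [Group G] [Finite G]
    (V A : Subgroup G) (hVea : IsElementaryAbelian p V)
    (hA : A ∈ maxElemAbIn p (⊤ : Subgroup G)) (hVA : ⁅V, A⁆ ≠ ⊥) :
    IsBestOffenderOn p A V := by
  obtain ⟨-, hAea, hAmax⟩ := hA
  obtain ⟨hcomm, hpow⟩ := isElementaryAbelian_iff_forall_mem.mp hAea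
  refine ⟨?_, ?_, ?_, ?_⟩
  · intro hAC
    exact hVA (commutator_eq_bot_iff_le_centralizer.mpr (le_centralizer_iff.mpr hAC))
  · intro a ha
    rw [hpow a ha]
    exact one_mem _
  · intro a ha b hb
    rw [(hcomm a ha b hb).eq, mul_inv_cancel_right, mul_inv_cancel]
    exact one_mem _
  · intro B hBA
    exact relIndex_mul_card_centralizer_le_of_maximal hVea hAea
      (fun D hD => hAmax D le_top hD) hBA

/-- Let `V` be an elementary abelian normal `p`-subgroup of a finite group
`G` and let `A ∈ 𝒜(G)` with `[V, A] ≠ 1`.  Then `A` is a best offender on `V`. -/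
theorem isBestOffender_of_mem_maxElemAb
    {p : ℕ} (hp : p.Prime) {G : Type*} [Group G] [Finite G]
    (V A : Subgroup G) (hV : V.Normal) (hVea : IsElementaryAbelian p V)
    (hA : A ∈ maxElemAbIn p (⊤ : Subgroup G)) (hVA : ⁅V, A⁆ ≠ ⊥) :
    IsBestOffenderOn p A V :=
  isBestOffender_of_mem_maxElemAb_general V A hVea hA hVA
end
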